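/- Let A be an n×n irreducible matrix with non-negative real entries whose spectral radius is at most 1. Let M be the maximum entry of A and m the minimum among the strictly positive entries of A. Then M ≤ m^{-n}. -/

import Mathlib

/-!
Non-negativity turns positive entries of powers into walks: a positive entry of `A ^ l` is at
least `m ^ l`, and by Cayley–Hamilton some power `A ^ l` with `l < n` already has a positive
`(j, i)` entry whenever any power does. Closing such a walk with the edge `A i j` gives
`m ^ l * A i j ≤ (A ^ (l + 1)) j j`. The spectral hypothesis bounds every diagonal entry of every
power by `1`: `((A ^ k) j j) ^ s ≤ trace (A ^ (k * s))`, which is a sum of `n` eigenvalues of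
modulus at most `1`, so it cannot grow geometrically.
-/

open Polynomial

namespace Matrix

theorem apply_mul_apply_le_mul_apply {ι κ ν R : Type*} [Fintype κ] [Semiring R] [PartialOrder R]
    [IsOrderedRing R] {B : Matrix ι κ R} {C : Matrix κ ν R}
    (hB : ∀ i k, 0 ≤ B i k) (hC : ∀ k j, 0 ≤ C k j) (i : ι) (k : κ) (j : ν) :
    B i k * C k j ≤ (B * C) i j :=
  Finset.single_le_sum (f := fun x => B i x * C x j)
    (fun x _ => mul_nonneg (hB i x) (hC x j)) (Finset.mem_univ k)

variable {ι : Type*} [Fintype ι] [DecidableEq ι]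

theorem exists_lt_card_pow_apply_ne_zero {R : Type*} [CommRing R] [Nontrivial R]
    (A : Matrix ι ι R) {k : ℕ} {i j : ι} (h : (A ^ k) i j ≠ 0) :
    ∃ l < Fintype.card ι, (A ^ l) i j ≠ 0 := by
  have : Nonempty ι := ⟨i⟩
  have hne : A.charpoly ≠ 1 := fun h1 => Fintype.card_ne_zero (α := ι) <| by
    simpa [h1] using A.charpoly_natDegree_eq_dim.symm
  have hdeg : (X ^ k %ₘ A.charpoly).natDegree < Fintype.card ι :=
    A.charpoly_natDegree_eq_dim ▸ natDegree_modByMonic_lt _ A.charpoly_monic hne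
  by_contra! hzero
  rw [pow_eq_aeval_mod_charpoly, aeval_eq_sum_range' hdeg, Matrix.sum_apply] at h
  exact h <| Finset.sum_eq_zero fun l hl => by
    rw [smul_apply, hzero l (Finset.mem_range.1 hl), smul_zero]

section Nonneg

variable {R : Type*} [CommRing R] [LinearOrder R] [IsStrictOrderedRing R] {A : Matrix ι ι R}

theorem exists_lt_card_pow_apply_pos (hA : ∀ i j, 0 ≤ A i j) {k : ℕ} {i j : ι}
    (h : 0 < (A ^ k) i j) : ∃ l < Fintype.card ι, 0 < (A ^ l) i j := by
  obtain ⟨l, hl, hne⟩ := A.exists_lt_card_pow_apply_ne_zero h.ne'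
  exact ⟨l, hl, (pow_apply_nonneg hA l i j).lt_of_ne' hne⟩

theorem apply_self_pow_le_pow_apply_self (hA : ∀ i j, 0 ≤ A i j) (s : ℕ) (j : ι) :
    A j j ^ s ≤ (A ^ s) j j := by
  induction s with
  | zero => simp
  | succ s ih =>
    calc A j j ^ (s + 1) = A j j ^ s * A j j := pow_succ _ _
      _ ≤ (A ^ s) j j * A j j := mul_le_mul_of_nonneg_right ih (hA j j)
      _ ≤ (A ^ (s + 1)) j j :=
        pow_succ A s ▸ apply_mul_apply_le_mul_apply (pow_apply_nonneg hA s) hA j j j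

theorem pow_le_pow_apply_of_pos {m : R} (hm0 : 0 ≤ m) (hA : ∀ i j, 0 ≤ A i j)
    (hm : ∀ i j, 0 < A i j → m ≤ A i j) {l : ℕ} {i j : ι} (h : 0 < (A ^ l) i j) :
    m ^ l ≤ (A ^ l) i j := by
  induction l generalizing j with
  | zero =>
    rcases eq_or_ne i j with rfl | hij
    · simp
    · simp [one_apply_ne hij] at h
  | succ l ih =>
    obtain ⟨k, -, hk⟩ : ∃ k ∈ Finset.univ, 0 < (A ^ l) i k * A k j := by
      rw [pow_succ, mul_apply] at h
      exact (Finset.sum_pos_iff_of_nonneg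
        fun k _ => mul_nonneg (pow_apply_nonneg hA l i k) (hA k j)).1 h
    have hAl := (pow_apply_nonneg hA l i k).lt_of_ne' (left_ne_zero_of_mul hk.ne')
    have hAkj := (hA k j).lt_of_ne' (right_ne_zero_of_mul hk.ne')
    calc m ^ (l + 1) = m ^ l * m := pow_succ _ _
      _ ≤ (A ^ l) i k * A k j :=
        mul_le_mul (ih hAl) (hm k j hAkj) hm0 (pow_apply_nonneg hA l i k)
      _ ≤ (A ^ (l + 1)) i j :=
        pow_succ A l ▸ apply_mul_apply_le_mul_apply (pow_apply_nonneg hA l) hA i k j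

end Nonneg

theorem norm_trace_le_card_of_spectrum (B : Matrix ι ι ℂ) (h : ∀ μ ∈ spectrum ℂ B, ‖μ‖ ≤ 1) :
    ‖B.trace‖ ≤ Fintype.card ι := by
  rw [trace_eq_sum_roots_charpoly]
  calc ‖B.charpoly.roots.sum‖ ≤ (B.charpoly.roots.map (‖·‖)).sum := norm_multiset_sum_le _
    _ ≤ (B.charpoly.roots.map (‖·‖)).card • (1 : ℝ) := by
      refine Multiset.sum_le_card_nsmul _ _ fun x hx => ?_
      obtain ⟨μ, hμ, rfl⟩ := Multiset.mem_map.1 hx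
      exact h μ (mem_spectrum_iff_isRoot_charpoly.2 (isRoot_of_mem_roots hμ))
    _ = Fintype.card ι := by
      simp [IsAlgClosed.card_roots_eq_natDegree, charpoly_natDegree_eq_dim]

theorem norm_trace_pow_le_card_of_spectrum (B : Matrix ι ι ℂ)
    (h : ∀ μ ∈ spectrum ℂ B, ‖μ‖ ≤ 1) (k : ℕ) : ‖(B ^ k).trace‖ ≤ Fintype.card ι := by
  rcases k.eq_zero_or_pos with rfl | hk
  · simp
  refine norm_trace_le_card_of_spectrum _ fun μ hμ => ?_
  rw [spectrum.map_pow_of_pos B hk] at hμ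
  obtain ⟨ν, hν, rfl⟩ := hμ
  simpa using pow_le_one₀ (norm_nonneg ν) (h ν hν)

section Real

variable {A : Matrix ι ι ℝ}

theorem trace_pow_le_card_of_spectrum (h : ∀ μ ∈ spectrum ℂ (A.map ((↑) : ℝ → ℂ)), ‖μ‖ ≤ 1)
    (k : ℕ) : (A ^ k).trace ≤ Fintype.card ι := by
  have hmap : A.map ((↑) : ℝ → ℂ) ^ k = (A ^ k).map Complex.ofRealHom :=
    (A.map_pow Complex.ofRealHom k).symm
  have hk := norm_trace_pow_le_card_of_spectrum _ h k
  rw [hmap, ← AddMonoidHom.map_trace] at hk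
  exact (le_abs_self _).trans (by simpa using hk)

theorem pow_apply_self_le_one_of_spectrum (hA : ∀ i j, 0 ≤ A i j)
    (h : ∀ μ ∈ spectrum ℂ (A.map ((↑) : ℝ → ℂ)), ‖μ‖ ≤ 1) (k : ℕ) (j : ι) :
    (A ^ k) j j ≤ 1 := by
  by_contra! hgt
  obtain ⟨s, hs⟩ := pow_unbounded_of_one_lt (Fintype.card ι : ℝ) hgt
  have hAk := pow_apply_nonneg hA k
  have : (A ^ k) j j ^ s ≤ Fintype.card ι :=
    calc (A ^ k) j j ^ s ≤ ((A ^ k) ^ s) j j := apply_self_pow_le_pow_apply_self hAk s j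
      _ ≤ ((A ^ k) ^ s).trace := Finset.single_le_sum (f := fun i => ((A ^ k) ^ s) i i)
          (fun i _ => pow_apply_nonneg hAk s i i) (Finset.mem_univ j)
      _ ≤ Fintype.card ι := by rw [← pow_mul]; exact trace_pow_le_card_of_spectrum h _
  linarith

theorem exists_lt_card_pow_mul_apply_le_one_of_spectrum (hA : ∀ i j, 0 ≤ A i j)
    (h : ∀ μ ∈ spectrum ℂ (A.map ((↑) : ℝ → ℂ)), ‖μ‖ ≤ 1) {m : ℝ} (hm0 : 0 ≤ m)
    (hm : ∀ i j, 0 < A i j → m ≤ A i j) {i j : ι} {k : ℕ} (hji : 0 < (A ^ k) j i) :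
    ∃ l < Fintype.card ι, m ^ l * A i j ≤ 1 := by
  obtain ⟨l, hl, hpos⟩ := exists_lt_card_pow_apply_pos hA hji
  refine ⟨l, hl, ?_⟩
  calc m ^ l * A i j ≤ (A ^ l) j i * A i j :=
        mul_le_mul_of_nonneg_right (pow_le_pow_apply_of_pos hm0 hA hm hpos) (hA i j)
    _ ≤ (A ^ (l + 1)) j j :=
        pow_succ A l ▸ apply_mul_apply_le_mul_apply (pow_apply_nonneg hA l) hA j i j
    _ ≤ 1 := pow_apply_self_le_one_of_spectrum hA h _ j

end Real

end Matrix

theorem max_entry_le_inv_min_pos_entry_pow_general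
    {n : ℕ} (A : Matrix (Fin n) (Fin n) ℝ)
    (hA : ∀ i j, 0 ≤ A i j)
    (hirr : ∀ i j, ∃ l : ℕ, 0 < (A ^ l) i j)
    (hspec : ∀ μ ∈ spectrum ℂ (A.map ((↑) : ℝ → ℂ)), ‖μ‖ ≤ 1)
    (M m : ℝ)
    (hM' : ∃ i j, A i j = M)
    (hm : ∀ i j, 0 < A i j → m ≤ A i j) (hm' : ∃ i j, 0 < A i j ∧ A i j = m) :
    M ≤ m⁻¹ ^ n := by
  obtain ⟨i₀, j₀, hm_pos, rfl⟩ := hm'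
  obtain ⟨i₁, j₁, rfl⟩ := hM'
  set m := A i₀ j₀
  have cycle_bound (i j : Fin n) : ∃ l < n, m ^ l * A i j ≤ 1 := by
    obtain ⟨k, hk⟩ := hirr j i
    simpa using Matrix.exists_lt_card_pow_mul_apply_le_one_of_spectrum hA hspec hm_pos.le hm hk
  have hm1 : m ≤ 1 := by
    obtain ⟨l, -, hl⟩ := cycle_bound i₀ j₀
    exact (pow_le_one_iff_of_nonneg hm_pos.le l.succ_ne_zero).1 (pow_succ m l ▸ hl)
  obtain ⟨l, hln, hl⟩ := cycle_bound i₁ j₁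
  calc A i₁ j₁ ≤ m⁻¹ ^ l := by rwa [inv_pow, ← one_div, le_div_iff₀' (pow_pos hm_pos l)]
    _ ≤ m⁻¹ ^ n := pow_le_pow_right₀ (one_le_inv₀ hm_pos |>.2 hm1) hln.le

/-- For an `n × n` irreducible non-negative real matrix `A` whose spectral
radius is at most `1` (all complex eigenvalues have modulus at most `1`), the maximum
entry `M` and the minimum strictly positive entry `m` satisfy `M ≤ m⁻¹ ^ n`. -/
theorem max_entry_le_inv_min_pos_entry_pow
    {n : ℕ} (hn : 0 < n) (A : Matrix (Fin n) (Fin n) ℝ)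
    (hA : ∀ i j, 0 ≤ A i j)
    (hirr : ∀ i j, ∃ l : ℕ, 0 < (A ^ l) i j)
    (hspec : ∀ μ ∈ spectrum ℂ (A.map ((↑) : ℝ → ℂ)), ‖μ‖ ≤ 1)
    (M m : ℝ)
    (hM : ∀ i j, A i j ≤ M) (hM' : ∃ i j, A i j = M)
    (hm : ∀ i j, 0 < A i j → m ≤ A i j) (hm' : ∃ i j, 0 < A i j ∧ A i j = m) :
    M ≤ m⁻¹ ^ n :=
  max_entry_le_inv_min_pos_entry_pow_general A hA hirr hspec M m hM' hm hm'
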